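/- arXiv:2401.17419 — 6 statements merged into one kernel-verified Lean document; each statement's English description precedes it below -/
import Mathlib

section
/- For every positive integer ℓ and every positive integer S, the infinite series ∑_{k=ℓ+1}^∞ k·S_k, where S_k = ∑_{s=1}^{S} 1/((k!)^S (k+1)^s), equals 1/((ℓ+1)!)^S. Equivalently, ∑_{k=ℓ+1}^∞ ∑_{s=1}^{S} k/((k!)^S (k+1)^s) = 1/((ℓ+1)!)^S. -/
/-!
Summing the geometric block over `s` gives `∑ₛ n / (n + 1)^s = 1 - 1 / (n + 1)^S`, so the `n`-th
term of the series is `1 / (n!)^S - 1 / ((n + 1)!)^S`. The series therefore telescopes, and since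
`1 / (n!)^S → 0` for `S ≥ 1` its value is the first term `1 / ((ℓ + 1)!)^S`.
-/

open Filter Finset Nat

theorem sum_Icc_div_add_one_pow {K : Type*} [Field K] (x : K) (hx : x + 1 ≠ 0) (S : ℕ) :
    ∑ s ∈ Icc 1 S, x / (x + 1) ^ s = 1 - 1 / (x + 1) ^ S := by
  induction S with
  | zero => simp
  | succ S ih =>
    rw [sum_Icc_succ_top (by omega), ih]
    field_simp
    ring

theorem sum_Icc_div_factorial_pow_mul_pow (n S : ℕ) :
    ∑ s ∈ Icc 1 S, (n : ℝ) / ((n ! : ℝ) ^ S * ((n + 1 : ℕ) : ℝ) ^ s)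
      = 1 / (n ! : ℝ) ^ S - 1 / ((n + 1)! : ℝ) ^ S := by
  have hx : (n : ℝ) + 1 ≠ 0 := by positivity
  calc ∑ s ∈ Icc 1 S, (n : ℝ) / ((n ! : ℝ) ^ S * ((n + 1 : ℕ) : ℝ) ^ s)
      = 1 / (n ! : ℝ) ^ S * ∑ s ∈ Icc 1 S, (n : ℝ) / ((n : ℝ) + 1) ^ s := by
        rw [mul_sum]
        refine sum_congr rfl fun s _ => ?_
        push_cast
        field_simp
    _ = 1 / (n ! : ℝ) ^ S - 1 / ((n + 1)! : ℝ) ^ S := by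
        rw [sum_Icc_div_add_one_pow _ hx, factorial_succ]
        push_cast
        rw [mul_pow]
        field_simp

theorem hasSum_sub_succ_of_antitone {g : ℕ → ℝ} {a : ℝ} (hg : Antitone g)
    (hlim : Tendsto g atTop (nhds a)) : HasSum (fun k => g k - g (k + 1)) (g 0 - a) := by
  rw [hasSum_iff_tendsto_nat_of_nonneg fun k => sub_nonneg.2 (hg k.le_succ)]
  simp only [sum_range_sub']
  exact hlim.const_sub (g 0)

theorem tendsto_one_div_factorial_pow_atTop (m : ℕ) {S : ℕ} (hS : S ≠ 0) :
    Tendsto (fun k => 1 / (((k + m)! : ℕ) : ℝ) ^ S) atTop (nhds 0) := by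
  simp only [one_div]
  refine tendsto_inv_atTop_zero.comp <| (tendsto_pow_atTop hS).comp <|
    tendsto_natCast_atTop_atTop.comp <| factorial_tendsto_atTop.comp (tendsto_add_atTop_nat m)

theorem sum_progressive_tail_general (ℓ S : ℕ) (hS : 1 ≤ S) :
    ∑' k : ℕ, ∑ s ∈ Finset.Icc 1 S,
        ((k + ℓ + 1 : ℕ) : ℝ) /
          (((Nat.factorial (k + ℓ + 1) : ℕ) : ℝ) ^ S * ((k + ℓ + 2 : ℕ) : ℝ) ^ s)
      = 1 / ((Nat.factorial (ℓ + 1) : ℝ) ^ S) := by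
  set g : ℕ → ℝ := fun k => 1 / (((k + ℓ + 1)! : ℕ) : ℝ) ^ S
  have hanti : Antitone g := antitone_nat_of_succ_le fun k => by
    simp only [g]
    gcongr
    omega
  have hsum : HasSum (fun k => g k - g (k + 1)) (g 0) := by
    simpa only [sub_zero] using hasSum_sub_succ_of_antitone hanti
      (tendsto_one_div_factorial_pow_atTop (ℓ + 1) (by omega))
  refine (tsum_congr fun k => ?_).trans (hsum.tsum_eq.trans (by simp [g]))
  rw [show k + ℓ + 2 = k + ℓ + 1 + 1 by rfl, sum_Icc_div_factorial_pow_mul_pow]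
  simp only [g, add_right_comm k 1 ℓ]

/-- For positive integers ℓ and S,
∑_{k=ℓ+1}^∞ ∑_{s=1}^{S} k/((k!)^S (k+1)^s) = 1/((ℓ+1)!)^S. -/
theorem sum_progressive_tail (ℓ S : ℕ) (hℓ : 1 ≤ ℓ) (hS : 1 ≤ S) :
    ∑' k : ℕ, ∑ s ∈ Finset.Icc 1 S,
        ((k + ℓ + 1 : ℕ) : ℝ) /
          (((Nat.factorial (k + ℓ + 1) : ℕ) : ℝ) ^ S * ((k + ℓ + 2 : ℕ) : ℝ) ^ s)
      = 1 / ((Nat.factorial (ℓ + 1) : ℝ) ^ S) :=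
  sum_progressive_tail_general ℓ S hS
end

section
/- Let x ∈ [0,1] and S a positive integer, and suppose x admits an S-progressive expansion x = ∑_{k=1}^∞ ∑_{s=1}^S x_{ks}/((k!)^S (k+1)^s) with digits x_{ks} ∈ {0,1,…,k}. If x < 1/((ℓ!)^S (ℓ+1)^t) for some positive integer ℓ and some t ∈ {1,…,S}, then x_{ks} = 0 for every pair (k,s) with (k,s) ⪯ (ℓ,t) in the lexicographic order (i.e., k < ℓ, or k = ℓ and s ≤ t). -/
/-! A nonzero digit `x_{ks}` alone contributes at least `1/((k!)^S (k+1)^s)` to the (nonnegative,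
summable) expansion, and this lower bound only decreases along the order `⪯`; so a nonzero digit at a
position `(k,s) ⪯ (ℓ,t)` would force `x ≥ 1/((ℓ!)^S (ℓ+1)^t)`. -/

open Nat Finset

def progressiveWeight (S k s : ℕ) : ℕ := k ! ^ S * (k + 1) ^ s

lemma progressiveWeight_pos (S k s : ℕ) : 0 < progressiveWeight S k s := by
  unfold progressiveWeight; positivity

lemma cast_progressiveWeight_succ (S n s : ℕ) :
    (progressiveWeight S (n + 1) s : ℝ) = ((n + 1)! : ℝ) ^ S * ((n : ℝ) + 2) ^ s := by
  simp only [progressiveWeight]; push_cast; ring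

lemma progressiveWeight_le_of_lex {S k s ℓ t : ℕ} (hsS : s ≤ S) (h : k < ℓ ∨ k = ℓ ∧ s ≤ t) :
    progressiveWeight S k s ≤ progressiveWeight S ℓ t := by
  unfold progressiveWeight
  rcases h with hlt | ⟨rfl, hst⟩
  · calc k ! ^ S * (k + 1) ^ s ≤ k ! ^ S * (k + 1) ^ S := by gcongr; omega
      _ = (k + 1)! ^ S := by rw [factorial_succ, mul_pow, mul_comm]
      _ ≤ ℓ ! ^ S := by gcongr; exact hlt
      _ ≤ ℓ ! ^ S * (ℓ + 1) ^ t := Nat.le_mul_of_pos_right _ (by positivity)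
  · gcongr; omega

lemma mul_factorial_le_progressiveWeight {S k s a : ℕ} (ha : a ≤ k) (hs : 1 ≤ s) (hsS : s ≤ S) :
    a * k ! ≤ progressiveWeight S k s := by
  unfold progressiveWeight
  calc a * k ! ≤ (k + 1) * k ! := by gcongr; omega
    _ ≤ k ! ^ S * (k + 1) ^ s := by
      rw [mul_comm]
      gcongr
      · exact Nat.le_self_pow (by omega) _
      · exact Nat.le_self_pow (by omega) _

lemma digit_div_progressiveWeight_le {S k s a : ℕ} (ha : a ≤ k) (hs : 1 ≤ s) (hsS : s ≤ S) :
    (a : ℝ) / progressiveWeight S k s ≤ 1 / k ! := by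
  rw [div_le_div_iff₀ (by exact_mod_cast progressiveWeight_pos S k s) (by positivity), one_mul]
  exact_mod_cast mul_factorial_le_progressiveWeight ha hs hsS

noncomputable def progressiveBlock (S : ℕ) (d : ℕ → ℕ → ℕ) (n : ℕ) : ℝ :=
  ∑ s ∈ Icc 1 S, (d (n + 1) s : ℝ) / progressiveWeight S (n + 1) s

section

variable {S : ℕ} {d : ℕ → ℕ → ℕ}

lemma progressiveBlock_nonneg (n : ℕ) : 0 ≤ progressiveBlock S d n :=
  sum_nonneg fun _ _ => by positivity

lemma progressiveBlock_le (hd : ∀ k s, 1 ≤ k → 1 ≤ s → s ≤ S → d k s ≤ k) (n : ℕ) :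
    progressiveBlock S d n ≤ S * (1 / (n + 1)!) := by
  calc progressiveBlock S d n ≤ ∑ _s ∈ Icc 1 S, (1 / (n + 1)! : ℝ) := by
        refine sum_le_sum fun s hs => ?_
        obtain ⟨hs1, hsS⟩ := mem_Icc.1 hs
        exact digit_div_progressiveWeight_le (hd _ s (by omega) hs1 hsS) hs1 hsS
    _ = S * (1 / (n + 1)!) := by simp

lemma summable_progressiveBlock (hd : ∀ k s, 1 ≤ k → 1 ≤ s → s ≤ S → d k s ≤ k) :
    Summable (progressiveBlock S d) := by
  have hfac : Summable fun n : ℕ => (1 / (n + 1)! : ℝ) := by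
    refine (summable_nat_add_iff (f := fun n : ℕ => (1 / n ! : ℝ)) 1).2 ?_
    simpa only [one_pow] using Real.summable_pow_div_factorial 1
  exact .of_nonneg_of_le progressiveBlock_nonneg (progressiveBlock_le hd) (hfac.mul_left _)

lemma digit_div_progressiveWeight_le_tsum (hd : ∀ k s, 1 ≤ k → 1 ≤ s → s ≤ S → d k s ≤ k)
    {k s : ℕ} (hk : 1 ≤ k) (hs : 1 ≤ s) (hsS : s ≤ S) :
    (d k s : ℝ) / progressiveWeight S k s ≤ ∑' n, progressiveBlock S d n := by
  obtain ⟨n, rfl⟩ : ∃ n, k = n + 1 := ⟨k - 1, by omega⟩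
  calc (d (n + 1) s : ℝ) / progressiveWeight S (n + 1) s ≤ progressiveBlock S d n :=
        single_le_sum (f := fun s => (d (n + 1) s : ℝ) / progressiveWeight S (n + 1) s)
          (fun _ _ => by positivity) (mem_Icc.2 ⟨hs, hsS⟩)
    _ ≤ ∑' n, progressiveBlock S d n :=
        (summable_progressiveBlock hd).le_tsum n fun _ _ => progressiveBlock_nonneg _

end

theorem progressive_expansion_small_general (S : ℕ) (x : ℝ)
    (d : ℕ → ℕ → ℕ)
    (hd : ∀ k s, 1 ≤ k → 1 ≤ s → s ≤ S → d k s ≤ k)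
    (hexp : x = ∑' k : ℕ, ∑ s ∈ Finset.Icc 1 S,
        ((d (k + 1) s : ℕ) : ℝ) /
          ((Nat.factorial (k + 1) : ℝ) ^ S * ((k : ℝ) + 2) ^ s))
    (ℓ t : ℕ)
    (hsmall : x < 1 / ((Nat.factorial ℓ : ℝ) ^ S * ((ℓ : ℝ) + 1) ^ t)) :
    ∀ k s, 1 ≤ k → 1 ≤ s → s ≤ S → (k < ℓ ∨ (k = ℓ ∧ s ≤ t)) → d k s = 0 := by
  intro k s hk hs hsS hord
  have hx : x = ∑' n, progressiveBlock S d n := by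
    simp only [hexp, progressiveBlock, cast_progressiveWeight_succ]
  have hℓt : (progressiveWeight S ℓ t : ℝ) = (ℓ ! : ℝ) ^ S * ((ℓ : ℝ) + 1) ^ t := by
    simp [progressiveWeight]
  by_contra hne
  have hdigit : (1 : ℝ) ≤ d k s := by exact_mod_cast Nat.one_le_iff_ne_zero.2 hne
  have hw : (progressiveWeight S k s : ℝ) ≤ progressiveWeight S ℓ t := by
    exact_mod_cast progressiveWeight_le_of_lex hsS hord
  have hlarge : 1 / (progressiveWeight S ℓ t : ℝ) ≤ x :=
    calc 1 / (progressiveWeight S ℓ t : ℝ) ≤ 1 / progressiveWeight S k s :=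
          one_div_le_one_div_of_le (by exact_mod_cast progressiveWeight_pos S k s) hw
      _ ≤ d k s / progressiveWeight S k s := by gcongr
      _ ≤ x := hx ▸ digit_div_progressiveWeight_le_tsum hd hk hs hsS
  rw [hℓt] at hlarge
  exact hlarge.not_gt hsmall

/-- If x ∈ [0,1] has an S-progressive expansion with digits `d k s ∈ {0,…,k}` and
x < 1/((ℓ!)^S (ℓ+1)^t) with 1 ≤ t ≤ S, then all digits at positions (k,s) ⪯ (ℓ,t) vanish. -/
theorem progressive_expansion_small (S : ℕ) (hS : 1 ≤ S) (x : ℝ)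
    (hx0 : 0 ≤ x) (hx1 : x ≤ 1)
    (d : ℕ → ℕ → ℕ)
    (hd : ∀ k s, 1 ≤ k → 1 ≤ s → s ≤ S → d k s ≤ k)
    (hexp : x = ∑' k : ℕ, ∑ s ∈ Finset.Icc 1 S,
        ((d (k + 1) s : ℕ) : ℝ) /
          ((Nat.factorial (k + 1) : ℝ) ^ S * ((k : ℝ) + 2) ^ s))
    (ℓ t : ℕ) (hℓ : 1 ≤ ℓ) (ht1 : 1 ≤ t) (htS : t ≤ S)
    (hsmall : x < 1 / ((Nat.factorial ℓ : ℝ) ^ S * ((ℓ : ℝ) + 1) ^ t)) :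
    ∀ k s, 1 ≤ k → 1 ≤ s → s ≤ S → (k < ℓ ∨ (k = ℓ ∧ s ≤ t)) → d k s = 0 :=
  progressive_expansion_small_general S x d hd hexp ℓ t hsmall
end

section
/- Let S be a positive integer and suppose {x_{ks}} and {y_{ks}} (for k ≥ 1, 1 ≤ s ≤ S, with digits x_{ks}, y_{ks} ∈ {0,…,k}) are two distinct S-progressive expansions of the same x ∈ [0,1]. Then there exists a pair (ℓ,t) such that x_{ks} = y_{ks} for all (k,s) ≺ (ℓ,t), |x_{ℓt} − y_{ℓt}| = 1, and for all (k,s) ≻ (ℓ,t) one of the expansions has digit 0 and the other has digit k (uniformly: the expansion with the larger digit at (ℓ,t) has all subsequent digits 0 and the other has all subsequent digits equal to their maximal value k). In particular, if x admits no finite expansion, its S-progressive expansion is unique. -/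
/-!
Listing the pairs `(k, s)` lexicographically as `n = (k - 1) * S + (s - 1)` turns an
`S`-progressive expansion into a mixed-radix expansion `∑ A n * w n` with digits
`A n ≤ M n = k` and place values `w n = ∏_{m ≤ n} (M m + 1)⁻¹ = 1 / ((k!)^S (k+1)^s)`.
Since `w n = (M (n+1) + 1) * w (n+1)`, the tail after `n` with all digits maximal telescopes
to exactly `w n`. If two expansions of the same number first differ at `n₀`, with the first
one larger there, the second one's tail must make up at least `w n₀`; it can make up at most
`w n₀`, so the gap at `n₀` is one and, after `n₀`, the first expansion is all zeros and the
second one all maximal.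
-/

open Finset Filter Topology
open scoped Nat

noncomputable def placeValue (M : ℕ → ℕ) (n : ℕ) : ℝ :=
  ∏ m ∈ range (n + 1), ((M m : ℝ) + 1)⁻¹

section PlaceValue

variable {M : ℕ → ℕ}

lemma placeValue_pos (n : ℕ) : 0 < placeValue M n := by
  unfold placeValue
  positivity

lemma natCast_mul_placeValue_succ (n : ℕ) :
    (M (n + 1) : ℝ) * placeValue M (n + 1) = placeValue M n - placeValue M (n + 1) := by
  have h : (M (n + 1) : ℝ) + 1 ≠ 0 := by positivity
  rw [placeValue, prod_range_succ, ← placeValue]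
  field_simp
  ring

lemma placeValue_le_half_pow (hM : ∀ n, 1 ≤ M n) (n : ℕ) :
    placeValue M n ≤ (1 / 2) ^ (n + 1) := by
  have hfactor : ∀ m ∈ range (n + 1), ((M m : ℝ) + 1)⁻¹ ≤ 1 / 2 := fun m _ => by
    have : (1 : ℝ) ≤ M m := by exact_mod_cast hM m
    rw [inv_le_comm₀ (by positivity) (by norm_num)]
    linarith
  simpa [placeValue] using prod_le_prod (fun m _ => by positivity) hfactor

lemma tendsto_placeValue (hM : ∀ n, 1 ≤ M n) : Tendsto (placeValue M) atTop (𝓝 0) := by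
  refine squeeze_zero (fun n => (placeValue_pos n).le) (placeValue_le_half_pow hM) ?_
  exact (tendsto_pow_atTop_nhds_zero_of_lt_one (r := (1 / 2 : ℝ)) (by norm_num)
    (by norm_num)).comp (tendsto_add_atTop_nat 1)

/-- The mixed-radix analogue of `0.999… = 1`. -/
lemma hasSum_placeValue_tail (hM : ∀ n, 1 ≤ M n) (n : ℕ) :
    HasSum (fun m => (M (m + (n + 1)) : ℝ) * placeValue M (m + (n + 1))) (placeValue M n) := by
  rw [hasSum_iff_tendsto_nat_of_nonneg fun m =>
    mul_nonneg (Nat.cast_nonneg _) (placeValue_pos _).le]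
  have partial_sum : ∀ N, ∑ m ∈ range N, (M (m + (n + 1)) : ℝ) * placeValue M (m + (n + 1)) =
      placeValue M n - placeValue M (n + N) := by
    intro N
    simp_rw [show ∀ m, m + (n + 1) = n + m + 1 by intro m; ring, natCast_mul_placeValue_succ]
    exact sum_range_sub' (fun m => placeValue M (n + m)) N
  simp_rw [partial_sum]
  have h := (tendsto_add_atTop_iff_nat n).2 (tendsto_placeValue hM)
  simp_rw [add_comm _ n] at h
  simpa using tendsto_const_nhds.sub h

lemma summable_digits_mul_placeValue (hM : ∀ n, 1 ≤ M n) {A : ℕ → ℕ} (hA : ∀ n, A n ≤ M n) :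
    Summable fun n => (A n : ℝ) * placeValue M n := by
  refine (summable_nat_add_iff 1).1 (Summable.of_nonneg_of_le
    (fun n => mul_nonneg (Nat.cast_nonneg _) (placeValue_pos _).le) (fun n => ?_)
    (hasSum_placeValue_tail hM 0).summable)
  exact mul_le_mul_of_nonneg_right (by exact_mod_cast hA _) (placeValue_pos _).le

end PlaceValue

section Digits

variable {M : ℕ → ℕ} {A B : ℕ → ℕ}

lemma hasSum_digit_diff_tail (hM : ∀ n, 1 ≤ M n) (hA : ∀ n, A n ≤ M n) (hB : ∀ n, B n ≤ M n)
    (hsum : ∑' n, (A n : ℝ) * placeValue M n = ∑' n, (B n : ℝ) * placeValue M n)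
    {n₀ : ℕ} (hagree : ∀ n < n₀, A n = B n) :
    HasSum (fun m => ((B (m + (n₀ + 1)) : ℝ) - A (m + (n₀ + 1))) * placeValue M (m + (n₀ + 1)))
      (((A n₀ : ℝ) - B n₀) * placeValue M n₀) := by
  have hdiff : HasSum (fun n => ((B n : ℝ) - A n) * placeValue M n) 0 := by
    simp_rw [sub_mul]
    simpa [hsum] using ((summable_digits_mul_placeValue hM hB).hasSum.sub
      (summable_digits_mul_placeValue hM hA).hasSum)
  have hhead : ∑ n ∈ range (n₀ + 1), ((B n : ℝ) - A n) * placeValue M n =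
      ((B n₀ : ℝ) - A n₀) * placeValue M n₀ := by
    rw [sum_range_succ, sum_eq_zero fun n hn => by rw [hagree n (mem_range.1 hn), sub_self,
      zero_mul], zero_add]
  have h := (hasSum_nat_add_iff' (n₀ + 1)).2 hdiff
  rwa [hhead, zero_sub, ← neg_mul, neg_sub] at h

theorem eq_add_one_and_tail_of_tsum_eq (hM : ∀ n, 1 ≤ M n) (hA : ∀ n, A n ≤ M n)
    (hB : ∀ n, B n ≤ M n)
    (hsum : ∑' n, (A n : ℝ) * placeValue M n = ∑' n, (B n : ℝ) * placeValue M n)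
    {n₀ : ℕ} (hagree : ∀ n < n₀, A n = B n) (hlt : B n₀ < A n₀) :
    A n₀ = B n₀ + 1 ∧ ∀ n, n₀ < n → A n = 0 ∧ B n = M n := by
  have htail := hasSum_digit_diff_tail hM hA hB hsum hagree
  have hmax := hasSum_placeValue_tail hM n₀
  have hle : ∀ n, ((B n : ℝ) - A n) * placeValue M n ≤ M n * placeValue M n := fun n => by
    have : (B n : ℝ) ≤ M n := by exact_mod_cast hB n
    have := placeValue_pos (M := M) n
    nlinarith
  have hgap : (1 : ℝ) ≤ A n₀ - B n₀ := by
    have : (B n₀ : ℝ) + 1 ≤ A n₀ := by exact_mod_cast hlt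
    linarith
  -- The tail can at best make up one unit at position `n₀`, so it must be maximal.
  have hmaximal : ∀ m, ((B (m + (n₀ + 1)) : ℝ) - A (m + (n₀ + 1))) * placeValue M (m + (n₀ + 1))
      = M (m + (n₀ + 1)) * placeValue M (m + (n₀ + 1)) := by
    by_contra! ⟨m, hm⟩
    have := hasSum_lt (i := m) (fun m => hle (m + (n₀ + 1))) (lt_of_le_of_ne (hle _) hm) htail hmax
    nlinarith [placeValue_pos (M := M) n₀]
  have hone : (A n₀ : ℝ) - B n₀ = 1 := by
    rw [funext hmaximal] at htail
    exact mul_right_cancel₀ (placeValue_pos n₀).ne' ((htail.unique hmax).trans (one_mul _).symm)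
  refine ⟨by exact_mod_cast (by linarith : (A n₀ : ℝ) = B n₀ + 1), fun n hn => ?_⟩
  obtain ⟨m, rfl⟩ : ∃ m, n = m + (n₀ + 1) := ⟨n - (n₀ + 1), by omega⟩
  have hcoef := mul_right_cancel₀ (placeValue_pos _).ne' (hmaximal m)
  have : (B (m + (n₀ + 1)) : ℝ) ≤ M (m + (n₀ + 1)) := by exact_mod_cast hB _
  have : (0 : ℝ) ≤ A (m + (n₀ + 1)) := Nat.cast_nonneg _
  exact ⟨by exact_mod_cast (by linarith : (A (m + (n₀ + 1)) : ℝ) = 0),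
    by exact_mod_cast (by linarith : (B (m + (n₀ + 1)) : ℝ) = M (m + (n₀ + 1)))⟩

theorem exists_first_diff_of_tsum_eq (hM : ∀ n, 1 ≤ M n)
    (hA : ∀ n, A n ≤ M n) (hB : ∀ n, B n ≤ M n)
    (hsum : ∑' n, (A n : ℝ) * placeValue M n = ∑' n, (B n : ℝ) * placeValue M n)
    (hne : ∃ n, A n ≠ B n) :
    ∃ n₀, (∀ n < n₀, A n = B n) ∧
      ((A n₀ = B n₀ + 1 ∧ ∀ n, n₀ < n → A n = 0 ∧ B n = M n) ∨
        (B n₀ = A n₀ + 1 ∧ ∀ n, n₀ < n → B n = 0 ∧ A n = M n)) := by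
  classical
  have hagree : ∀ n < Nat.find hne, A n = B n := fun n hn => not_not.1 (Nat.find_min hne hn)
  refine ⟨Nat.find hne, hagree, ?_⟩
  rcases lt_or_gt_of_ne (Nat.find_spec hne) with hlt | hlt
  · exact .inr (eq_add_one_and_tail_of_tsum_eq hM hB hA hsum.symm
      (fun n hn => (hagree n hn).symm) hlt)
  · exact .inl (eq_add_one_and_tail_of_tsum_eq hM hA hB hsum hagree hlt)

end Digits

lemma lt_iff_div_lt_or_div_eq_and_mod_lt (S : ℕ) {m n : ℕ} :
    m < n ↔ m / S < n / S ∨ m / S = n / S ∧ m % S < n % S := by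
  constructor
  · intro h
    refine (Nat.div_le_div_right h.le).lt_or_eq.imp id fun hdiv => ⟨hdiv, ?_⟩
    rw [← Nat.div_add_mod m S, ← Nat.div_add_mod n S, hdiv] at h
    omega
  · rintro (hdiv | ⟨hdiv, hmod⟩)
    · exact Nat.lt_of_div_lt_div hdiv
    · rw [← Nat.div_add_mod m S, ← Nat.div_add_mod n S, hdiv]
      omega

section Progressive

variable {S : ℕ}

lemma mul_add_div_eq_of_lt (k : ℕ) {i : ℕ} (hi : i < S) : (k * S + i) / S = k := by
  rw [add_comm, Nat.add_mul_div_right _ _ (by omega), Nat.div_eq_of_lt hi, zero_add]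

lemma prod_range_div_add_two_block (k : ℕ) {i : ℕ} (hi : i ≤ S) :
    ∏ j ∈ range i, ((k * S + j) / S + 2) = (k + 2) ^ i := by
  rw [prod_congr rfl (g := fun _ => k + 2), prod_const, card_range]
  intro j hj
  rw [mul_add_div_eq_of_lt k (by simp at hj; omega), add_comm]

lemma prod_range_mul_div_add_two (k : ℕ) :
    ∏ m ∈ range (k * S), (m / S + 2) = (k + 1)! ^ S := by
  induction k with
  | zero => simp
  | succ k ih =>
    rw [add_mul, one_mul, prod_range_add, ih, prod_range_div_add_two_block k le_rfl,
      ← mul_pow, Nat.factorial_succ (k + 1)]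
    ring

lemma placeValue_div_add_one (k : ℕ) {i : ℕ} (hi : i < S) :
    placeValue (fun n => n / S + 1) (k * S + i) =
      (((k + 1)! : ℝ) ^ S * ((k : ℝ) + 2) ^ (i + 1))⁻¹ := by
  have h : ∏ m ∈ range (k * S + i + 1), (m / S + 2) = (k + 1)! ^ S * (k + 2) ^ (i + 1) := by
    rw [add_assoc, prod_range_add, prod_range_mul_div_add_two,
      prod_range_div_add_two_block k hi]
  rw [placeValue, prod_inv_distrib]
  congr 1
  exact_mod_cast h

lemma tsum_progressive_eq (hS : 0 < S) (a : ℕ → ℕ → ℕ)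
    (ha : ∀ n, a (n / S + 1) (n % S + 1) ≤ n / S + 1) :
    ∑' k : ℕ, ∑ s ∈ Icc 1 S, ((a (k + 1) s : ℕ) : ℝ) / (((k + 1)! : ℝ) ^ S * ((k : ℝ) + 2) ^ s) =
      ∑' n, (a (n / S + 1) (n % S + 1) : ℝ) * placeValue (fun n => n / S + 1) n := by
  have : NeZero S := ⟨hS.ne'⟩
  have h := (summable_digits_mul_placeValue (by simp) ha).hasSum
  refine (((Nat.divModEquiv S).symm.hasSum_iff.2 h).prod_fiberwise fun k => ?_).tsum_eq
  convert hasSum_fintype (β := Fin S) _ using 1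
  rw [← Ico_add_one_right_eq_Icc, sum_Ico_eq_sum_range, Nat.add_sub_cancel,
    ← Fin.sum_univ_eq_sum_range]
  refine sum_congr rfl fun i _ => ?_
  simp [mul_add_div_eq_of_lt k i.isLt, Nat.mul_add_mod_of_lt i.isLt,
    placeValue_div_add_one k i.isLt, div_eq_mul_inv, add_comm 1]

lemma exists_div_add_one_eq {k s : ℕ} (hk : 1 ≤ k) (hs : 1 ≤ s) (hsS : s ≤ S) :
    ∃ n, n / S + 1 = k ∧ n % S + 1 = s :=
  ⟨(k - 1) * S + (s - 1), by rw [mul_add_div_eq_of_lt _ (by omega)]; omega,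
    by rw [Nat.mul_add_mod_of_lt (by omega)]; omega⟩

lemma forall_lex_lt_of_forall_lt {P : ℕ → ℕ → Prop} {n₀ : ℕ}
    (h : ∀ n < n₀, P (n / S + 1) (n % S + 1)) :
    ∀ k s, 1 ≤ k → 1 ≤ s → s ≤ S → (k < n₀ / S + 1 ∨ (k = n₀ / S + 1 ∧ s < n₀ % S + 1)) →
      P k s := by
  intro k s hk hs hsS hlex
  obtain ⟨n, rfl, rfl⟩ := exists_div_add_one_eq hk hs hsS
  exact h n ((lt_iff_div_lt_or_div_eq_and_mod_lt S).2 (by omega))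

lemma forall_lex_gt_of_forall_gt {P : ℕ → ℕ → Prop} {n₀ : ℕ}
    (h : ∀ n, n₀ < n → P (n / S + 1) (n % S + 1)) :
    ∀ k s, 1 ≤ k → 1 ≤ s → s ≤ S → (n₀ / S + 1 < k ∨ (k = n₀ / S + 1 ∧ n₀ % S + 1 < s)) →
      P k s := by
  intro k s hk hs hsS hlex
  obtain ⟨n, rfl, rfl⟩ := exists_div_add_one_eq hk hs hsS
  exact h n ((lt_iff_div_lt_or_div_eq_and_mod_lt S).2 (by omega))

end Progressive

theorem progressive_expansion_unique_general (S : ℕ) (hS : 1 ≤ S) (x : ℝ)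
    (a b : ℕ → ℕ → ℕ)
    (ha : ∀ k s, 1 ≤ k → 1 ≤ s → s ≤ S → a k s ≤ k)
    (hb : ∀ k s, 1 ≤ k → 1 ≤ s → s ≤ S → b k s ≤ k)
    (hexpa : x = ∑' k : ℕ, ∑ s ∈ Finset.Icc 1 S,
        ((a (k + 1) s : ℕ) : ℝ) /
          ((Nat.factorial (k + 1) : ℝ) ^ S * ((k : ℝ) + 2) ^ s))
    (hexpb : x = ∑' k : ℕ, ∑ s ∈ Finset.Icc 1 S,
        ((b (k + 1) s : ℕ) : ℝ) /
          ((Nat.factorial (k + 1) : ℝ) ^ S * ((k : ℝ) + 2) ^ s))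
    (hne : ∃ k s, 1 ≤ k ∧ 1 ≤ s ∧ s ≤ S ∧ a k s ≠ b k s) :
    ∃ ℓ t, 1 ≤ ℓ ∧ 1 ≤ t ∧ t ≤ S ∧
      (∀ k s, 1 ≤ k → 1 ≤ s → s ≤ S → (k < ℓ ∨ (k = ℓ ∧ s < t)) → a k s = b k s) ∧
      ((a ℓ t = b ℓ t + 1 ∧
          ∀ k s, 1 ≤ k → 1 ≤ s → s ≤ S → (ℓ < k ∨ (k = ℓ ∧ t < s)) →
            a k s = 0 ∧ b k s = k) ∨
       (b ℓ t = a ℓ t + 1 ∧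
          ∀ k s, 1 ≤ k → 1 ≤ s → s ≤ S → (ℓ < k ∨ (k = ℓ ∧ t < s)) →
            b k s = 0 ∧ a k s = k)) := by
  have hS0 : 0 < S := hS
  have digit_le (c : ℕ → ℕ → ℕ) (hc : ∀ k s, 1 ≤ k → 1 ≤ s → s ≤ S → c k s ≤ k) (n : ℕ) :
      c (n / S + 1) (n % S + 1) ≤ n / S + 1 :=
    hc _ _ (Nat.le_add_left 1 _) (Nat.le_add_left 1 _) (Nat.mod_lt n hS0)
  have hne' : ∃ n, a (n / S + 1) (n % S + 1) ≠ b (n / S + 1) (n % S + 1) := by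
    obtain ⟨k, s, hk, hs, hsS, hab⟩ := hne
    obtain ⟨n, rfl, rfl⟩ := exists_div_add_one_eq hk hs hsS
    exact ⟨n, hab⟩
  have hsum := (tsum_progressive_eq hS0 a (digit_le a ha)).symm.trans
    (hexpa.symm.trans (hexpb.trans (tsum_progressive_eq hS0 b (digit_le b hb))))
  obtain ⟨n₀, hagree, hfirst⟩ :=
    exists_first_diff_of_tsum_eq (by simp) (digit_le a ha) (digit_le b hb) hsum hne'
  refine ⟨n₀ / S + 1, n₀ % S + 1, Nat.le_add_left 1 _, Nat.le_add_left 1 _, Nat.mod_lt n₀ hS0,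
    forall_lex_lt_of_forall_lt hagree, ?_⟩
  rcases hfirst with ⟨hstep, htail⟩ | ⟨hstep, htail⟩
  · exact .inl ⟨hstep, forall_lex_gt_of_forall_gt htail⟩
  · exact .inr ⟨hstep, forall_lex_gt_of_forall_gt htail⟩

/-- Two distinct S-progressive expansions of the same x ∈ [0,1] differ in the structured way:
they agree before some position (ℓ,t), differ by exactly one there, and after (ℓ,t) the
expansion with the larger digit has all digits 0 while the other has all maximal digits. -/
theorem progressive_expansion_unique (S : ℕ) (hS : 1 ≤ S) (x : ℝ)
    (hx0 : 0 ≤ x) (hx1 : x ≤ 1)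
    (a b : ℕ → ℕ → ℕ)
    (ha : ∀ k s, 1 ≤ k → 1 ≤ s → s ≤ S → a k s ≤ k)
    (hb : ∀ k s, 1 ≤ k → 1 ≤ s → s ≤ S → b k s ≤ k)
    (hexpa : x = ∑' k : ℕ, ∑ s ∈ Finset.Icc 1 S,
        ((a (k + 1) s : ℕ) : ℝ) /
          ((Nat.factorial (k + 1) : ℝ) ^ S * ((k : ℝ) + 2) ^ s))
    (hexpb : x = ∑' k : ℕ, ∑ s ∈ Finset.Icc 1 S,
        ((b (k + 1) s : ℕ) : ℝ) /
          ((Nat.factorial (k + 1) : ℝ) ^ S * ((k : ℝ) + 2) ^ s))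
    (hne : ∃ k s, 1 ≤ k ∧ 1 ≤ s ∧ s ≤ S ∧ a k s ≠ b k s) :
    ∃ ℓ t, 1 ≤ ℓ ∧ 1 ≤ t ∧ t ≤ S ∧
      (∀ k s, 1 ≤ k → 1 ≤ s → s ≤ S → (k < ℓ ∨ (k = ℓ ∧ s < t)) → a k s = b k s) ∧
      ((a ℓ t = b ℓ t + 1 ∧
          ∀ k s, 1 ≤ k → 1 ≤ s → s ≤ S → (ℓ < k ∨ (k = ℓ ∧ t < s)) →
            a k s = 0 ∧ b k s = k) ∨
       (b ℓ t = a ℓ t + 1 ∧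
          ∀ k s, 1 ≤ k → 1 ≤ s → s ≤ S → (ℓ < k ∨ (k = ℓ ∧ t < s)) →
            b k s = 0 ∧ a k s = k)) :=
  progressive_expansion_unique_general S hS x a b ha hb hexpa hexpb hne
end

section
/- Let X be uniformly distributed on [0,1] and let X = ∑_{k=1}^∞ ∑_{s=1}^S X_{ks}/((k!)^S (k+1)^s) be its S-progressive expansion with digits X_{ks} ∈ {0,…,k}. Then each digit X_{ks} is uniformly distributed on {0,1,…,k}, i.e., P(X_{ks} = n) = 1/(k+1) for every n ∈ {0,…,k}. -/
open MeasureTheory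

/-- The event {x ∈ [0,1) : x_{ks} = n} for the S-progressive expansion, given as a
union of intervals. -/
def digitEvent (S k s n : ℕ) : Set ℝ :=
  ⋃ i ∈ Finset.range (Nat.factorial k ^ S * (k + 1) ^ (s - 1)),
    Set.Ico ((((k + 1) * i + n : ℕ) : ℝ) / ((Nat.factorial k : ℝ) ^ S * ((k : ℝ) + 1) ^ s))
            ((((k + 1) * i + n : ℕ) + 1 : ℝ) / ((Nat.factorial k : ℝ) ^ S * ((k : ℝ) + 1) ^ s))

/-
The digit event is a union of `(k!)^S (k+1)^(s-1)` pairwise disjoint intervals of length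
`1 / ((k!)^S (k+1)^s)` (their left ends are distinct integers over the common denominator);
its measure is therefore the ratio of these two numbers, which is `1 / (k+1)` as soon as `s ≥ 1`.
-/

theorem disjoint_Ico_natCast_div {a b : ℕ} (hab : a < b) {D : ℝ} (hD : 0 < D) :
    Disjoint (Set.Ico ((a : ℝ) / D) ((a + 1 : ℝ) / D))
      (Set.Ico ((b : ℝ) / D) ((b + 1 : ℝ) / D)) :=
  Set.Ico_disjoint_Ico_same.mono_right <| Set.Ico_subset_Ico_left <|
    div_le_div_of_nonneg_right (by exact_mod_cast hab) hD.le

theorem volume_biUnion_Ico_natCast_div {ι : Type*} (t : Finset ι) {a : ι → ℕ}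
    (ha : Set.InjOn a t) {D : ℝ} (hD : 0 < D) :
    volume (⋃ i ∈ t, Set.Ico ((a i : ℝ) / D) ((a i + 1 : ℝ) / D)) =
      t.card * ENNReal.ofReal (1 / D) := by
  have hdisj : (t : Set ι).PairwiseDisjoint
      fun i => Set.Ico ((a i : ℝ) / D) ((a i + 1 : ℝ) / D) := by
    intro i hi j hj hij
    rcases (ha.ne hi hj hij).lt_or_gt with h | h
    · exact disjoint_Ico_natCast_div h hD
    · exact (disjoint_Ico_natCast_div h hD).symm
  rw [measure_biUnion_finset hdisj fun _ _ => measurableSet_Ico, ← nsmul_eq_mul,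
    ← Finset.sum_const]
  refine Finset.sum_congr rfl fun i _ => ?_
  rw [Real.volume_Ico, ← sub_div, add_sub_cancel_left]

theorem digit_uniform_general (S k s n : ℕ) (hs1 : 1 ≤ s) :
    volume (digitEvent S k s n) = ENNReal.ofReal (1 / ((k : ℝ) + 1)) := by
  have hD : (0 : ℝ) < (Nat.factorial k : ℝ) ^ S * ((k : ℝ) + 1) ^ s := by positivity
  have hinj : Set.InjOn (fun i => (k + 1) * i + n)
      (Finset.range (k.factorial ^ S * (k + 1) ^ (s - 1))) :=
    fun i _ j _ h => by simpa using h
  rw [digitEvent, volume_biUnion_Ico_natCast_div _ hinj hD, Finset.card_range,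
    ← ENNReal.ofReal_natCast, ← ENNReal.ofReal_mul (Nat.cast_nonneg _)]
  congr 1
  obtain ⟨r, rfl⟩ := Nat.exists_eq_add_of_le' hs1
  push_cast
  field_simp
  ring

/-- For X uniform on [0,1], each digit X_{ks} of the S-progressive expansion is uniform
on {0,…,k}: P(X_{ks} = n) = 1/(k+1). -/
theorem digit_uniform (S k s n : ℕ) (hS : 1 ≤ S) (hk : 1 ≤ k) (hs1 : 1 ≤ s) (hsS : s ≤ S)
    (hn : n ≤ k) :
    volume (digitEvent S k s n) = ENNReal.ofReal (1 / ((k : ℝ) + 1)) :=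
  digit_uniform_general S k s n hs1
end

section
/- Let X be uniformly distributed on [0,1] with S-progressive expansion digits X_{ks}. Then the digits are pairwise independent: for any two distinct pairs (k,s) ≠ (ℓ,t) and any n ∈ {0,…,k}, m ∈ {0,…,ℓ}, we have P(X_{ks} = n and X_{ℓt} = m) = 1/((k+1)(ℓ+1)). -/
open MeasureTheory

/-!
Split `[0,1)` into `N` blocks of length `1/N` and each block into `b` cells; `digitSet N b d`,
the union of the `d`-th cells of all blocks, meets every block in `1/b` of its length. The event
`X_{ks} = n` is such a set with `N = k!^S (k+1)^{s-1}`, `b = k + 1`. If `(k,s) < (ℓ,t)`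
lexicographically, then `k!^S (k+1)^s ∣ (k+1)!^S ∣ ℓ!^S`, so every cell of the first set is a union
of whole blocks of the second, and the intersection has measure `1/(ℓ+1)` times the measure
`1/(k+1)` of the first set.
-/

open scoped Nat

def gridIco (D c : ℕ) : Set ℝ := Set.Ico ((c : ℝ) / D) ((c + 1 : ℝ) / D)

def digitSet (N b d : ℕ) : Set ℝ := ⋃ i ∈ Finset.range N, gridIco (N * b) (b * i + d)

section Grid

variable {D c u v : ℕ}

theorem volume_gridIco (D c : ℕ) : volume (gridIco D c) = ENNReal.ofReal (1 / D) := by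
  rw [gridIco, Real.volume_Ico]
  ring_nf

theorem gridIco_subset_Ico (hu : u ≤ c) (hv : c < v) :
    gridIco D c ⊆ Set.Ico ((u : ℝ) / D) ((v : ℝ) / D) := by
  apply Set.Ico_subset_Ico
  · gcongr
  · gcongr
    norm_cast

theorem disjoint_gridIco_Ico (h : c < u ∨ v ≤ c) :
    Disjoint (gridIco D c) (Set.Ico ((u : ℝ) / D) ((v : ℝ) / D)) := by
  rw [gridIco, Set.Ico_disjoint_Ico]
  rcases h with h | h
  · have : ((c : ℝ) + 1) / D ≤ (u : ℝ) / D := by gcongr; exact_mod_cast h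
    exact (min_le_left _ _).trans (this.trans (le_max_right _ _))
  · have : (v : ℝ) / D ≤ (c : ℝ) / D := by gcongr
    exact (min_le_right _ _).trans (this.trans (le_max_left _ _))

theorem gridIco_inter_Ico :
    gridIco D c ∩ Set.Ico ((u : ℝ) / D) ((v : ℝ) / D)
      = if c ∈ Finset.Ico u v then gridIco D c else ∅ := by
  split_ifs with h
  · rw [Finset.mem_Ico] at h
    exact Set.inter_eq_left.mpr (gridIco_subset_Ico h.1 h.2)
  · rw [Finset.mem_Ico] at h
    exact (disjoint_gridIco_Ico (by omega)).inter_eq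

theorem pairwise_disjoint_gridIco (D : ℕ) : Pairwise (Function.onFun Disjoint (gridIco D)) := by
  intro c c' h
  have hc' : gridIco D c' = Set.Ico ((c' : ℝ) / D) (((c' + 1 : ℕ) : ℝ) / D) := by
    rw [gridIco, Nat.cast_succ]
  rw [Function.onFun, hc']
  exact disjoint_gridIco_Ico (by omega)

theorem gridIco_eq_Ico_mul {q : ℕ} (hq : q ≠ 0) (D c : ℕ) :
    gridIco D c = Set.Ico (((c * q : ℕ) : ℝ) / (D * q : ℕ)) (((c * q + q : ℕ) : ℝ) / (D * q : ℕ)) := by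
  have hq' : (q : ℝ) ≠ 0 := by exact_mod_cast hq
  rw [gridIco]
  push_cast
  congr 1 <;> field_simp

theorem gridIco_mul_add_subset {q d : ℕ} (hd : d < q) (D c : ℕ) :
    gridIco (D * q) (q * c + d) ⊆ gridIco D c := by
  rw [gridIco_eq_Ico_mul (D := D) (c := c) (by omega : q ≠ 0)]
  exact gridIco_subset_Ico (by rw [mul_comm]; omega) (by rw [mul_comm]; omega)

end Grid

section DigitSet

variable {N b d : ℕ}

theorem measurableSet_digitSet : MeasurableSet (digitSet N b d) :=
  Finset.measurableSet_biUnion _ fun _ _ => measurableSet_Ico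

theorem volume_digitSet_inter (hd : d < b) {X : Set ℝ} (hX : MeasurableSet X) :
    volume (digitSet N b d ∩ X) = ∑ i ∈ Finset.range N, volume (gridIco (N * b) (b * i + d) ∩ X) := by
  rw [digitSet, Set.iUnion₂_inter, measure_biUnion_finset]
  · intro i _ j _ hij
    have hcells : b * i + d ≠ b * j + d := by
      intro h
      exact hij (Nat.eq_of_mul_eq_mul_left (by omega : 0 < b) (by omega))
    exact (pairwise_disjoint_gridIco _ hcells).mono Set.inter_subset_left Set.inter_subset_left
  · exact fun _ _ => measurableSet_Ico.inter hX

theorem volume_digitSet_inter_Ico (hd : d < b) {u v : ℕ} (hv : v ≤ N) :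
    volume (digitSet N b d ∩ Set.Ico ((u : ℝ) / N) ((v : ℝ) / N))
      = (v - u : ℕ) * ENNReal.ofReal (1 / (N * b : ℕ)) := by
  have hcell : ∀ i, gridIco (N * b) (b * i + d) ∩ Set.Ico ((u : ℝ) / N) ((v : ℝ) / N)
      = if i ∈ Finset.Ico u v then gridIco (N * b) (b * i + d) else ∅ := by
    intro i
    rw [← Set.inter_eq_left.mpr (gridIco_mul_add_subset hd N i), Set.inter_assoc,
      gridIco_inter_Ico]
    split_ifs <;> simp only [Set.inter_empty]
  have hrange : Finset.range N ∩ Finset.Ico u v = Finset.Ico u v :=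
    Finset.inter_eq_right.mpr (by
      rw [Finset.range_eq_Ico]
      exact Finset.Ico_subset_Ico (Nat.zero_le u) hv)
  simp only [volume_digitSet_inter hd measurableSet_Ico, hcell, apply_ite volume, measure_empty,
    volume_gridIco, Finset.sum_ite_mem, hrange, Finset.sum_const, Nat.card_Ico, nsmul_eq_mul]

end DigitSet

theorem volume_digitSet_inter_digitSet_of_dvd {N₁ b₁ d₁ N₂ b₂ d₂ : ℕ} (hd₁ : d₁ < b₁)
    (hd₂ : d₂ < b₂) (hN₂ : 0 < N₂) (hdvd : N₁ * b₁ ∣ N₂) :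
    volume (digitSet N₁ b₁ d₁ ∩ digitSet N₂ b₂ d₂) = ENNReal.ofReal (1 / ((b₁ : ℝ) * b₂)) := by
  obtain ⟨q, rfl⟩ := hdvd
  obtain ⟨hN₁b₁, hq⟩ := CanonicallyOrderedAdd.mul_pos.mp hN₂
  have hN₁ : 0 < N₁ := (CanonicallyOrderedAdd.mul_pos.mp hN₁b₁).1
  have hcell : ∀ i ∈ Finset.range N₁,
      volume (gridIco (N₁ * b₁) (b₁ * i + d₁) ∩ digitSet (N₁ * b₁ * q) b₂ d₂)
        = q * ENNReal.ofReal (1 / (N₁ * b₁ * q * b₂ : ℕ)) := by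
    intro i hi
    have hcell_le : b₁ * i + d₁ + 1 ≤ N₁ * b₁ := by
      have := Finset.mem_range.mp hi
      nlinarith
    rw [gridIco_eq_Ico_mul hq.ne', Set.inter_comm,
      volume_digitSet_inter_Ico hd₂ (by nlinarith), Nat.add_sub_cancel_left]
  rw [volume_digitSet_inter hd₁ measurableSet_digitSet, Finset.sum_congr rfl hcell,
    Finset.sum_const, Finset.card_range, nsmul_eq_mul, ← mul_assoc, ← Nat.cast_mul,
    ← ENNReal.ofReal_natCast, ← ENNReal.ofReal_mul (by positivity)]
  have hN₁' : (N₁ : ℝ) ≠ 0 := by positivity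
  have hq' : (q : ℝ) ≠ 0 := by positivity
  congr 1
  push_cast
  field_simp

theorem digitEvent_eq_digitSet {S k s : ℕ} (hs : 1 ≤ s) (n : ℕ) :
    digitEvent S k s n = digitSet (k ! ^ S * (k + 1) ^ (s - 1)) (k + 1) n := by
  have hden : (k ! : ℝ) ^ S * ((k : ℝ) + 1) ^ s
      = ((k ! ^ S * (k + 1) ^ (s - 1) * (k + 1) : ℕ) : ℝ) := by
    obtain ⟨s, rfl⟩ := Nat.exists_eq_add_of_le' hs
    push_cast
    ring
  simp only [digitEvent, digitSet, gridIco, hden]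

theorem factorial_pow_mul_succ_pow_dvd {S k s ℓ t : ℕ} (hs : 1 ≤ s) (hsS : s ≤ S)
    (h : k < ℓ ∨ k = ℓ ∧ s < t) :
    k ! ^ S * (k + 1) ^ (s - 1) * (k + 1) ∣ ℓ ! ^ S * (ℓ + 1) ^ (t - 1) := by
  rw [mul_assoc, ← pow_succ, Nat.sub_add_cancel hs]
  rcases h with h | ⟨rfl, h⟩
  · calc k ! ^ S * (k + 1) ^ s ∣ k ! ^ S * (k + 1) ^ S := mul_dvd_mul_left _ (pow_dvd_pow _ hsS)
      _ = (k + 1)! ^ S := by rw [← mul_pow, Nat.factorial_succ, mul_comm]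
      _ ∣ ℓ ! ^ S := pow_dvd_pow_of_dvd (Nat.factorial_dvd_factorial h) S
      _ ∣ ℓ ! ^ S * (ℓ + 1) ^ (t - 1) := dvd_mul_right _ _
  · exact mul_dvd_mul_left _ (pow_dvd_pow _ (by omega))

theorem digits_pairwise_independent_general (S k s ℓ t n m : ℕ)
    (hs1 : 1 ≤ s) (hsS : s ≤ S)
    (ht1 : 1 ≤ t) (htS : t ≤ S)
    (hne : (k, s) ≠ (ℓ, t)) (hn : n ≤ k) (hm : m ≤ ℓ) :
    volume (digitEvent S k s n ∩ digitEvent S ℓ t m)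
      = ENNReal.ofReal (1 / (((k : ℝ) + 1) * ((ℓ : ℝ) + 1))) := by
  wlog hlt : k < ℓ ∨ k = ℓ ∧ s < t generalizing k s ℓ t n m
  · have hgt : ℓ < k ∨ ℓ = k ∧ t < s := by
      have : k ≠ ℓ ∨ s ≠ t := by
        by_contra! h
        exact hne (by rw [h.1, h.2])
      omega
    rw [Set.inter_comm, mul_comm]
    exact this ℓ t k s m n ht1 htS hs1 hsS hne.symm hm hn hgt
  rw [digitEvent_eq_digitSet hs1, digitEvent_eq_digitSet ht1,
    volume_digitSet_inter_digitSet_of_dvd (by omega) (by omega) (by positivity)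
      (factorial_pow_mul_succ_pow_dvd hs1 hsS hlt), Nat.cast_succ, Nat.cast_succ]

/-- For X uniform on [0,1], the digits of the S-progressive expansion are pairwise
independent: for distinct positions (k,s) ≠ (ℓ,t),
P(X_{ks} = n, X_{ℓt} = m) = 1/((k+1)(ℓ+1)). -/
theorem digits_pairwise_independent (S k s ℓ t n m : ℕ) (hS : 1 ≤ S)
    (hk : 1 ≤ k) (hs1 : 1 ≤ s) (hsS : s ≤ S)
    (hℓ : 1 ≤ ℓ) (ht1 : 1 ≤ t) (htS : t ≤ S)
    (hne : (k, s) ≠ (ℓ, t)) (hn : n ≤ k) (hm : m ≤ ℓ) :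
    volume (digitEvent S k s n ∩ digitEvent S ℓ t m)
      = ENNReal.ofReal (1 / (((k : ℝ) + 1) * ((ℓ : ℝ) + 1))) :=
  digits_pairwise_independent_general S k s ℓ t n m hs1 hsS ht1 htS hne hn hm
end

section
/- Fix positive integers N and ℓ ≥ 2. Suppose (a_{kn}) and (b_{kn}) for k ≥ 1, n ∈ {1,…,N} satisfy a_{kn} ∈ {−1,0,…,k+1}, b_{kn} ∈ {0,…,k}, and a_{kn} = b_{kn} for all k ≤ ℓ−2. Then |∑_{k=1}^∞ ∑_{n=1}^N (a_{kn} − b_{kn})/((k!)^N (k+1)^n)| ≤ 2/(((ℓ−1)!)^N). -/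
/-!
With `F k = 2 / ((k + 1)!) ^ N`, the `k`-th inner sum (indexed from `k = 0`) vanishes for
`k < ℓ - 2`, and otherwise, since `|a - b| ≤ k + 2`, it is bounded by the geometric sum
`(k + 2) ∑ₙ (k + 2)⁻ⁿ / ((k + 1)!) ^ N ≤ F k - F (k + 1)`. The series is therefore dominated
by a telescoping series whose sum is `F (ℓ - 2) = 2 / ((ℓ - 1)!) ^ N`.
-/
open Finset Nat

lemma mul_sum_Icc_inv_pow_le {r : ℝ} (hr : 2 ≤ r) (N : ℕ) :
    r * ∑ n ∈ Icc 1 N, (r ^ n)⁻¹ ≤ 2 * (1 - (r ^ N)⁻¹) := by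
  induction N with
  | zero => simp
  | succ N ih =>
    rw [sum_Icc_succ_top (by omega), mul_add, pow_succ, mul_inv]
    have hlast : r * ((r ^ N)⁻¹ * r⁻¹) = (r ^ N)⁻¹ := by field_simp
    have hhalf : 2 * ((r ^ N)⁻¹ * r⁻¹) ≤ (r ^ N)⁻¹ := by
      rw [mul_left_comm]
      exact mul_le_of_le_one_right (by positivity) (mul_inv_le_one_of_le₀ hr (by positivity))
    linarith

lemma abs_sum_div_pow_le {P r : ℝ} (hP : 0 < P) (hr : 2 ≤ r) {N : ℕ} {d : ℕ → ℝ}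
    (hd : ∀ n ∈ Icc 1 N, |d n| ≤ r) :
    |∑ n ∈ Icc 1 N, d n / (P ^ N * r ^ n)| ≤ 2 / P ^ N - 2 / (r * P) ^ N := by
  have hr0 : 0 < r := by linarith
  calc |∑ n ∈ Icc 1 N, d n / (P ^ N * r ^ n)|
      ≤ ∑ n ∈ Icc 1 N, |d n| / (P ^ N * r ^ n) := by
        refine (abs_sum_le_sum_abs _ _).trans_eq (sum_congr rfl fun n _ => ?_)
        rw [abs_div, abs_of_pos (by positivity : 0 < P ^ N * r ^ n)]
    _ ≤ ∑ n ∈ Icc 1 N, r / (P ^ N * r ^ n) :=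
        sum_le_sum fun n hn => div_le_div_of_nonneg_right (hd n hn) (by positivity)
    _ = (P ^ N)⁻¹ * (r * ∑ n ∈ Icc 1 N, (r ^ n)⁻¹) := by
        rw [mul_sum, mul_sum]
        refine sum_congr rfl fun n _ => ?_
        field_simp
    _ ≤ (P ^ N)⁻¹ * (2 * (1 - (r ^ N)⁻¹)) :=
        mul_le_mul_of_nonneg_left (mul_sum_Icc_inv_pow_le hr N) (by positivity)
    _ = 2 / P ^ N - 2 / (r * P) ^ N := by
        field_simp
        ring

lemma abs_tsum_le_of_abs_le_sub_succ {f F : ℕ → ℝ} (hF : ∀ k, 0 ≤ F k)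
    (hf : ∀ k, |f k| ≤ F k - F (k + 1)) : |∑' k, f k| ≤ F 0 := by
  have partial_le : ∀ K, ∑ k ∈ range K, |f k| ≤ F 0 := fun K =>
    calc ∑ k ∈ range K, |f k| ≤ ∑ k ∈ range K, (F k - F (k + 1)) := sum_le_sum fun k _ => hf k
      _ = F 0 - F K := sum_range_sub' F K
      _ ≤ F 0 := sub_le_self _ (hF K)
  have hsum : Summable fun k => |f k| := summable_of_sum_range_le (fun k => abs_nonneg _) partial_le
  calc |∑' k, f k| ≤ ∑' k, |f k| := by
        simpa only [Real.norm_eq_abs] using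
          norm_tsum_le_tsum_norm (f := f) (by simpa only [Real.norm_eq_abs] using hsum)
    _ ≤ F 0 := hsum.tsum_le_of_sum_range_le partial_le

theorem decoding_error_bound_general (N ℓ : ℕ)
    (a b : ℕ → ℕ → ℤ)
    (ha : ∀ k n, 1 ≤ k → 1 ≤ n → n ≤ N → -1 ≤ a k n ∧ a k n ≤ (k : ℤ) + 1)
    (hb : ∀ k n, 1 ≤ k → 1 ≤ n → n ≤ N → 0 ≤ b k n ∧ b k n ≤ (k : ℤ))
    (hagree : ∀ k n, 1 ≤ k → k ≤ ℓ - 2 → 1 ≤ n → n ≤ N → a k n = b k n) :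
    |∑' k : ℕ, ∑ n ∈ Finset.Icc 1 N,
        ((a (k + 1) n - b (k + 1) n : ℤ) : ℝ) /
          ((Nat.factorial (k + 1) : ℝ) ^ N * ((k : ℝ) + 2) ^ n)|
      ≤ 2 / (Nat.factorial (ℓ - 1) : ℝ) ^ N := by
  set F : ℕ → ℝ := fun k => 2 / ((k + 1)! : ℝ) ^ N
  have hdiff : ∀ k, ∀ n ∈ Icc 1 N, |((a (k + 1) n - b (k + 1) n : ℤ) : ℝ)| ≤ k + 2 := by
    intro k n hn
    obtain ⟨hn1, hnN⟩ := mem_Icc.mp hn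
    obtain ⟨ha1, ha2⟩ := ha (k + 1) n k.succ_pos hn1 hnN
    obtain ⟨hb1, hb2⟩ := hb (k + 1) n k.succ_pos hn1 hnN
    push_cast at ha2 hb2
    have : |a (k + 1) n - b (k + 1) n| ≤ (k : ℤ) + 2 := abs_le.mpr ⟨by linarith, by linarith⟩
    exact_mod_cast this
  have hterm : ∀ k, |∑ n ∈ Icc 1 N, ((a (k + 1) n - b (k + 1) n : ℤ) : ℝ) /
      ((k + 1)! ^ N * ((k : ℝ) + 2) ^ n)| ≤ F (max k (ℓ - 2)) - F (max (k + 1) (ℓ - 2)) := by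
    intro k
    -- freezing `F` at `ℓ - 2` below that index lets the bound telescope from `k = 0`
    rcases lt_or_ge k (ℓ - 2) with hk | hk
    · rw [max_eq_right hk.le, max_eq_right hk, sub_self, abs_nonpos_iff]
      refine sum_eq_zero fun n hn => ?_
      obtain ⟨hn1, hnN⟩ := mem_Icc.mp hn
      rw [hagree (k + 1) n k.succ_pos hk hn1 hnN, sub_self, Int.cast_zero, zero_div]
    · rw [max_eq_left hk, max_eq_left (hk.trans k.le_succ)]
      have hfac : ((k + 1 + 1)! : ℝ) = ((k : ℝ) + 2) * (k + 1)! := by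
        push_cast [factorial_succ (k + 1)]; ring
      simp only [F, hfac]
      exact abs_sum_div_pow_le (by positivity) (by linarith [k.cast_nonneg (α := ℝ)]) (hdiff k)
  calc _ ≤ F (max 0 (ℓ - 2)) := abs_tsum_le_of_abs_le_sub_succ (fun k => by positivity) hterm
    _ = 2 / ((ℓ - 1)! : ℝ) ^ N := by
      rcases ℓ with _ | _ | ℓ <;> rfl

/-- If a_{kn} ∈ {−1,…,k+1}, b_{kn} ∈ {0,…,k}, and a_{kn} = b_{kn} for all k ≤ ℓ−2, then
|∑_{k≥1} ∑_{n=1}^N (a_{kn} − b_{kn})/((k!)^N (k+1)^n)| ≤ 2/((ℓ−1)!)^N. -/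
theorem decoding_error_bound (N ℓ : ℕ) (hN : 1 ≤ N) (hℓ : 2 ≤ ℓ)
    (a b : ℕ → ℕ → ℤ)
    (ha : ∀ k n, 1 ≤ k → 1 ≤ n → n ≤ N → -1 ≤ a k n ∧ a k n ≤ (k : ℤ) + 1)
    (hb : ∀ k n, 1 ≤ k → 1 ≤ n → n ≤ N → 0 ≤ b k n ∧ b k n ≤ (k : ℤ))
    (hagree : ∀ k n, 1 ≤ k → k ≤ ℓ - 2 → 1 ≤ n → n ≤ N → a k n = b k n) :
    |∑' k : ℕ, ∑ n ∈ Finset.Icc 1 N,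
        ((a (k + 1) n - b (k + 1) n : ℤ) : ℝ) /
          ((Nat.factorial (k + 1) : ℝ) ^ N * ((k : ℝ) + 2) ^ n)|
      ≤ 2 / (Nat.factorial (ℓ - 1) : ℝ) ^ N :=
  decoding_error_bound_general N ℓ a b ha hb hagree
end
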